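/- Let C be a k-linear category with length. If there exists an irreducible morphism x → y, then every nonzero element of C(x,y) is irreducible. -/

import Mathlib

open CategoryTheory

/-- Powers of the ideal `RC` of non-invertible morphisms of `C`. -/
def RPow (C : Type*) [Category C] [Preadditive C] : ℕ → (x y : C) → AddSubgroup (x ⟶ y)
  | 0, _, _ => ⊤
  | n + 1, x, y => AddSubgroup.closure
      { f | ∃ (z : C) (g : x ⟶ z) (h : z ⟶ y),
          g ∈ RPow C n x z ∧ ¬ IsIso h ∧ f = g ≫ h }

/-- Irreducible morphism of `C` : lies in `RC` but not in `R²C`. -/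
def IrredC {C : Type*} [Category C] [Preadditive C] {x y : C} (f : x ⟶ y) : Prop :=
  ¬ IsIso f ∧ f ∉ RPow C 2 x y

/-- `PathLen C n x y` : there is a path of `n` irreducible morphisms from `x` to `y`. -/
inductive PathLen (C : Type*) [Category C] [Preadditive C] : ℕ → C → C → Prop
  | nil (x : C) : PathLen C 0 x x
  | cons {n : ℕ} {x y z : C} : PathLen C n x y → ∀ g : y ⟶ z, IrredC g →
      PathLen C (n + 1) x z

section Aux

variable {C : Type*} [Category C] [Preadditive C]

lemma mem_RPow_succ {n : ℕ} {x z y : C} {g : x ⟶ z} (hg : g ∈ RPow C n x z)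
    {h : z ⟶ y} (hh : ¬ IsIso h) : g ≫ h ∈ RPow C (n + 1) x y := by
  rw [RPow]
  exact AddSubgroup.subset_closure ⟨z, g, h, hg, hh, rfl⟩

lemma RPow_succ_le : ∀ (n : ℕ) (x y : C), RPow C (n + 1) x y ≤ RPow C n x y := by
  intro n
  induction n with
  | zero => intro x y; simp [RPow]
  | succ n ih =>
    intro x y
    rw [RPow]
    refine (AddSubgroup.closure_le _).mpr ?_
    rintro f ⟨z, g, h, hg, hh, rfl⟩
    exact mem_RPow_succ (ih x z hg) hh

lemma RPow_antitone {m n : ℕ} (hmn : m ≤ n) (x y : C) : RPow C n x y ≤ RPow C m x y := by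
  induction hmn with
  | refl => exact le_rfl
  | step h ih => exact (RPow_succ_le _ x y).trans ih

lemma leftComp_RPow : ∀ (n : ℕ) {x' x y : C} (k : x' ⟶ x) (f : x ⟶ y),
    f ∈ RPow C n x y → k ≫ f ∈ RPow C n x' y := by
  intro n
  induction n with
  | zero => intro x' x y k f _; simp [RPow]
  | succ n ih =>
    intro x' x y k f hf
    rw [RPow] at hf
    induction hf using AddSubgroup.closure_induction with
    | mem f hf =>
      obtain ⟨z, g, h, hg, hh, rfl⟩ := hf
      rw [← Category.assoc]
      exact mem_RPow_succ (ih k g hg) hh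
    | zero => rw [Limits.comp_zero]; exact zero_mem _
    | add a b _ _ ha hb => rw [Preadditive.comp_add]; exact add_mem ha hb
    | neg a _ ha => rw [Preadditive.comp_neg]; exact neg_mem ha

lemma idem_mem_RPow {z : C} {e : z ⟶ z} (he : e ≫ e = e) (hni : ¬ IsIso e) :
    ∀ n, e ∈ RPow C n z z := by
  intro n
  induction n with
  | zero => simp [RPow]
  | succ n ih =>
    have := mem_RPow_succ ih hni
    rwa [he] at this

/-- If `v` is not an iso but `v ≫ a` is, then (using separation) the source collapses. -/
lemma collapse (hsep : ∀ (x y : C) (f : x ⟶ y), (∀ n, f ∈ RPow C n x y) → f = 0)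
    {w z y : C} {v : w ⟶ z} (hv : ¬ IsIso v) {a : z ⟶ y} (hi : IsIso (v ≫ a)) :
    𝟙 w = (0 : w ⟶ w) := by
  set r : z ⟶ w := a ≫ inv (v ≫ a) with hr
  have hvr : v ≫ r = 𝟙 w := by rw [hr, ← Category.assoc, IsIso.hom_inv_id]
  set e : z ⟶ z := r ≫ v with he
  have hee : e ≫ e = e := by
    rw [he, Category.assoc, ← Category.assoc v r, hvr, Category.id_comp]
  have hne : ¬ IsIso e := by
    intro hIso
    apply hv
    set u : z ⟶ w := inv e ≫ r with hu
    have huv : u ≫ v = 𝟙 z := by rw [hu, Category.assoc, ← he, IsIso.inv_hom_id]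
    have hur : u = r := by
      calc u = u ≫ (v ≫ r) := by rw [hvr, Category.comp_id]
        _ = (u ≫ v) ≫ r := (Category.assoc u v r).symm
        _ = r := by rw [huv, Category.id_comp]
    exact ⟨u, by rw [hur]; exact hvr, huv⟩
  have he0 : e = 0 := hsep _ _ e (idem_mem_RPow hee hne)
  calc 𝟙 w = (v ≫ r) ≫ (v ≫ r) := by rw [hvr]; simp
    _ = v ≫ e ≫ r := by simp [he]
    _ = 0 := by rw [he0]; simp

lemma rightComp_RPow (hsep : ∀ (x y : C) (f : x ⟶ y), (∀ n, f ∈ RPow C n x y) → f = 0) :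
    ∀ (n : ℕ) {x z y : C} (f : x ⟶ z), f ∈ RPow C n x z → ∀ (a : z ⟶ y),
      f ≫ a ∈ RPow C n x y := by
  intro n
  induction n with
  | zero => intro x z y f _ a; simp [RPow]
  | succ n ih =>
    intro x z y f hf a
    rw [RPow] at hf
    induction hf using AddSubgroup.closure_induction with
    | mem f hf =>
      obtain ⟨w, g, v, hg, hv, rfl⟩ := hf
      by_cases hva : IsIso (v ≫ a)
      · have h0 : 𝟙 w = (0 : w ⟶ w) := collapse hsep hv hva
        have : (g ≫ v) ≫ a = 0 := by
          have : g = 0 := by rw [← Category.comp_id g, h0, Limits.comp_zero]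
          rw [this, Limits.zero_comp, Limits.zero_comp]
        rw [this]; exact zero_mem _
      · rw [Category.assoc]
        exact mem_RPow_succ hg hva
    | zero => rw [Limits.zero_comp]; exact zero_mem _
    | add p q _ _ hp hq => rw [Preadditive.add_comp]; exact add_mem hp hq
    | neg p _ hp => rw [Preadditive.neg_comp]; exact neg_mem hp

lemma comp_RPow (hsep : ∀ (x y : C) (f : x ⟶ y), (∀ n, f ∈ RPow C n x y) → f = 0) :
    ∀ (m n : ℕ) {x z y : C} (f : x ⟶ z), f ∈ RPow C n x z → ∀ (h : z ⟶ y),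
      h ∈ RPow C m z y → f ≫ h ∈ RPow C (n + m) x y := by
  intro m
  induction m with
  | zero => intro n x z y f hf h _; exact rightComp_RPow hsep n f hf h
  | succ m ih =>
    intro n x z y f hf h hh
    rw [RPow] at hh
    induction hh using AddSubgroup.closure_induction with
    | mem h hh =>
      obtain ⟨w, u, v, hu, hv, rfl⟩ := hh
      rw [← Category.assoc]
      exact mem_RPow_succ (ih n f hf u hu) hv
    | zero => rw [Limits.comp_zero]; exact zero_mem _
    | add p q _ _ hp hq => rw [Preadditive.comp_add]; exact add_mem hp hq
    | neg p _ hp => rw [Preadditive.comp_neg]; exact neg_mem hp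

/-- Chains of `n` composable irreducible morphisms. -/
inductive IsChain' {C : Type*} [Category C] [Preadditive C] :
    ℕ → ∀ {x y : C}, (x ⟶ y) → Prop
  | single {x y : C} {f : x ⟶ y} (hf : IrredC f) : IsChain' 1 f
  | cons {n : ℕ} {x y z : C} {f : x ⟶ y} {g : y ⟶ z} (hf : IsChain' n f) (hg : IrredC g) :
      IsChain' (n + 1) (f ≫ g)

lemma IsChain'.mem_RPow {n : ℕ} {x y : C} {f : x ⟶ y} (h : IsChain' n f) :
    f ∈ RPow C n x y := by
  induction h with
  | @single x y f hf =>
    have := mem_RPow_succ (n := 0) (g := 𝟙 x) (h := f) (AddSubgroup.mem_top _) hf.1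
    rwa [Category.id_comp] at this
  | cons hf hg ih => exact mem_RPow_succ ih hg.1

lemma IsChain'.pathLen {n : ℕ} {x y : C} {f : x ⟶ y} (h : IsChain' n f) :
    PathLen C n x y := by
  induction h with
  | single hf => exact PathLen.cons (PathLen.nil _) _ hf
  | cons hf hg ih => exact PathLen.cons ih _ hg

/-- Key structural lemma: `R^{n+1} ⊆ ⟨chains of length n+1⟩ + R^{n+2}`. -/
lemma RPow_structure (hsep : ∀ (x y : C) (f : x ⟶ y), (∀ n, f ∈ RPow C n x y) → f = 0) :
    ∀ (n : ℕ) (x y : C), RPow C (n + 1) x y ≤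
      AddSubgroup.closure {f : x ⟶ y | IsChain' (n + 1) f} ⊔ RPow C (n + 2) x y := by
  intro n
  induction n with
  | zero =>
    intro x y
    rw [RPow]
    refine (AddSubgroup.closure_le _).mpr ?_
    rintro f ⟨z, g, h, hg, hh, rfl⟩
    by_cases hh2 : h ∈ RPow C 2 z y
    · exact AddSubgroup.mem_sup_right (leftComp_RPow 2 g h hh2)
    · have hirr : IrredC h := ⟨hh, hh2⟩
      by_cases hgi : IsIso g
      · refine AddSubgroup.mem_sup_left (AddSubgroup.subset_closure ?_)
        refine IsChain'.single ⟨?_, ?_⟩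
        · intro hcomp
          exact hh (by
            have : h = inv g ≫ (g ≫ h) := by simp
            rw [this]; infer_instance)
        · intro hcomp
          have : h = inv g ≫ (g ≫ h) := by simp
          rw [this] at hh2
          exact hh2 (leftComp_RPow 2 _ _ hcomp)
      · have hg1 : g ∈ RPow C 1 x z := by
          have := mem_RPow_succ (n := 0) (g := 𝟙 x) (AddSubgroup.mem_top _) hgi
          rwa [Category.id_comp] at this
        exact AddSubgroup.mem_sup_right (mem_RPow_succ hg1 hh)
  | succ n ih =>
    intro x y
    conv_lhs => rw [RPow]
    refine (AddSubgroup.closure_le _).mpr ?_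
    rintro f ⟨z, g, v, hg, hv, rfl⟩
    have key : ∀ c : x ⟶ z, c ∈ AddSubgroup.closure {f : x ⟶ z | IsChain' (n + 1) f} →
        c ≫ v ∈ AddSubgroup.closure {f : x ⟶ y | IsChain' (n + 1 + 1) f}
          ⊔ RPow C (n + 1 + 2) x y := by
      intro c hc
      induction hc using AddSubgroup.closure_induction with
      | mem c hcch =>
        by_cases hv2 : v ∈ RPow C 2 z y
        · refine AddSubgroup.mem_sup_right ?_
          have := comp_RPow hsep 2 (n + 1) c hcch.mem_RPow v hv2
          exact RPow_antitone (by omega) x y this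
        · exact AddSubgroup.mem_sup_left
            (AddSubgroup.subset_closure (IsChain'.cons hcch ⟨hv, hv2⟩))
      | zero => rw [Limits.zero_comp]; exact zero_mem _
      | add p q _ _ hp hq => rw [Preadditive.add_comp]; exact add_mem hp hq
      | neg p _ hp => rw [Preadditive.neg_comp]; exact neg_mem hp
    obtain ⟨c, hc, r, hr, hcr⟩ := AddSubgroup.mem_sup.mp (ih x z hg)
    have hsplit : g ≫ v = c ≫ v + r ≫ v := by
      rw [← Preadditive.add_comp, hcr]
    rw [hsplit]
    exact add_mem (key c hc) (AddSubgroup.mem_sup_right (mem_RPow_succ hr hv))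

end Aux

/-- In a `k`-linear category with length, if there is an irreducible
morphism `x → y`, then every nonzero morphism `x → y` is irreducible. -/
theorem stmt9 {k : Type*} [Field k] {C : Type*} [Category C] [Preadditive C]
    [CategoryTheory.Linear k C]
    (hfin : ∀ x y : C, FiniteDimensional k (x ⟶ y))
    (hdist : ∀ x y : C, Nonempty (x ≅ y) → x = y)
    (hconst : ∀ (x y : C) (m n : ℕ), PathLen C m x y → PathLen C n x y → m = n)
    (hsep : ∀ (x y : C) (f : x ⟶ y), (∀ n, f ∈ RPow C n x y) → f = 0)
    (x y : C) (g : x ⟶ y) (hg : IrredC g) :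
    ∀ f : x ⟶ y, f ≠ 0 → IrredC f := by
  intro f hf0
  have hpath1 : PathLen C 1 x y := PathLen.cons (PathLen.nil x) g hg
  constructor
  · -- f is not an iso
    intro hIso
    have hxy : x = y := hdist x y ⟨asIso f⟩
    subst hxy
    exact absurd (hconst x x 0 1 (PathLen.nil x) hpath1) (by omega)
  · -- f ∉ R²
    intro hf2
    -- no chains of length ≥ 2 from x to y
    have hnochain : ∀ (m : ℕ) (c : x ⟶ y), ¬ IsChain' (m + 2) c := by
      intro m c hc
      have := hconst x y (m + 2) 1 hc.pathLen hpath1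
      omega
    -- R^{m+2}(x,y) ⊆ R^{m+3}(x,y)
    have hstep : ∀ m : ℕ, RPow C (m + 2) x y ≤ RPow C (m + 3) x y := by
      intro m
      refine (RPow_structure hsep (m + 1) x y).trans ?_
      refine sup_le ?_ le_rfl
      refine ((AddSubgroup.closure_le _).mpr ?_).trans bot_le
      intro c hc
      exact absurd hc (hnochain m c)
    have hall : ∀ n, f ∈ RPow C n x y := by
      intro n
      match n with
      | 0 => simp [RPow]
      | 1 => exact RPow_antitone (by omega) x y hf2
      | (m + 2) =>
        induction m with
        | zero => exact hf2
        | succ m ihm => exact hstep m ihm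
    exact hf0 (hsep x y f hall)
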